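/- arXiv:1802.01071 — 3 statements merged into one kernel-verified Lean document; each statement's English description precedes it below -/
import Mathlib

section
/- Let α and β be finite types, let f : ℝ → ℝ be convex on [0, ∞), and let p and q be probability mass functions on α × β with q strictly positive. Then the f-divergence of the joint distributions dominates that of the α-marginals: ∑_{(a,b)} q(a,b) · f(p(a,b)/q(a,b)) ≥ ∑_a q_α(a) · f(p_α(a)/q_α(a)), where p_α(a) = ∑_b p(a,b) and q_α(a) = ∑_b q(a,b). -/
/-- **Lemma 1 (f-divergences do not increase under marginalization).**
If `f : ℝ → ℝ` is convex on `[0, ∞)` and `p`, `q` are probability mass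
functions on `α × β` with `q` strictly positive, then the f-divergence of
the joints dominates the f-divergence of the `α`-marginals. -/
theorem f_divergence_marginalization
    {α β : Type*} [Fintype α] [Fintype β]
    (f : ℝ → ℝ) (hf : ConvexOn ℝ (Set.Ici (0 : ℝ)) f)
    (p q : α × β → ℝ)
    (hp0 : ∀ x, 0 ≤ p x) (hp1 : ∑ x, p x = 1)
    (hq0 : ∀ x, 0 < q x) (hq1 : ∑ x, q x = 1) :
    ∑ a : α, (∑ b : β, q (a, b)) * f ((∑ b : β, p (a, b)) / (∑ b : β, q (a, b)))
      ≤ ∑ x : α × β, q x * f (p x / q x) := by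
  cases isEmpty_or_nonempty β with
  | inl h => simp [Fintype.sum_prod_type] at hq1
  | inr h =>
  rw [Fintype.sum_prod_type]
  apply Finset.sum_le_sum
  intro a _
  set Q : ℝ := ∑ b : β, q (a, b) with hQ
  have hQpos : 0 < Q := Finset.sum_pos (fun b _ => hq0 (a, b)) Finset.univ_nonempty
  have key : f ((∑ b : β, p (a, b)) / Q) ≤
      ∑ b : β, (q (a, b) / Q) * f (p (a, b) / q (a, b)) := by
    have h := hf.map_sum_le (t := Finset.univ) (w := fun b => q (a, b) / Q)
      (p := fun b => p (a, b) / q (a, b))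
      (fun b _ => div_nonneg (hq0 (a, b)).le hQpos.le)
      (by rw [← Finset.sum_div]; exact div_self hQpos.ne')
      (fun b _ => Set.mem_Ici.mpr (div_nonneg (hp0 (a, b)) (hq0 (a, b)).le))
    have hsum : ∑ b : β, (q (a, b) / Q) • (p (a, b) / q (a, b))
        = (∑ b : β, p (a, b)) / Q := by
      rw [Finset.sum_div]
      refine Finset.sum_congr rfl fun b _ => ?_
      have := (hq0 (a, b)).ne'
      rw [smul_eq_mul]
      field_simp
    rw [hsum] at h
    refine h.trans_eq (Finset.sum_congr rfl fun b _ => ?_)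
    rw [smul_eq_mul]
  calc Q * f ((∑ b : β, p (a, b)) / Q)
      ≤ Q * ∑ b : β, (q (a, b) / Q) * f (p (a, b) / q (a, b)) :=
        mul_le_mul_of_nonneg_left key hQpos.le
    _ = ∑ b : β, q (a, b) * f (p (a, b) / q (a, b)) := by
        rw [Finset.mul_sum]
        refine Finset.sum_congr rfl fun b _ => ?_
        field_simp
end

section
/- Let α and β be finite types and let p and q be strictly positive probability mass functions on α × β. Then the Jensen–Shannon-type divergence of the α-marginals is at most that of the joints: D_JS(p_α‖q_α) ≤ D_JS(p‖q), where p_α(a) = ∑_b p(a,b) and q_α(a) = ∑_b q(a,b). -/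
/-- The log-sum inequality. -/
lemma log_sum_ineq {ι : Type*} [Fintype ι] [Nonempty ι] (p m : ι → ℝ)
    (hp : ∀ i, 0 < p i) (hm : ∀ i, 0 < m i) :
    (∑ i, p i) * Real.log ((∑ i, p i) / (∑ i, m i)) ≤
      ∑ i, p i * Real.log (p i / m i) := by
  have hSp : 0 < ∑ i, p i := Finset.sum_pos (fun i _ => hp i) Finset.univ_nonempty
  have hSm : 0 < ∑ i, m i := Finset.sum_pos (fun i _ => hm i) Finset.univ_nonempty
  have key : ∀ i : ι, p i * Real.log ((∑ j, p j) / (∑ j, m j)) ≤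
      p i * Real.log (p i / m i) - (p i - (m i) * ((∑ j, p j) / (∑ j, m j))) := by
    intro i
    have hpi := hp i
    have hmi := hm i
    have hx : 0 < (m i * (∑ j, p j)) / (p i * (∑ j, m j)) := by positivity
    have hlog := Real.log_le_sub_one_of_pos hx
    have h1 : Real.log ((m i * (∑ j, p j)) / (p i * (∑ j, m j)))
        = Real.log ((∑ j, p j) / (∑ j, m j)) - Real.log (p i / m i) := by
      rw [Real.log_div (by positivity) (by positivity),
        Real.log_mul hmi.ne' hSp.ne', Real.log_mul hpi.ne' hSm.ne',
        Real.log_div hSp.ne' hSm.ne', Real.log_div hpi.ne' hmi.ne']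
      ring
    rw [h1] at hlog
    have h3 : p i * ((m i * (∑ j, p j)) / (p i * (∑ j, m j)))
        = m i * ((∑ j, p j) / (∑ j, m j)) := by
      field_simp
    have hM := mul_le_mul_of_nonneg_left hlog hpi.le
    rw [mul_sub, mul_sub, mul_one, h3] at hM
    linarith
  calc (∑ i, p i) * Real.log ((∑ i, p i) / (∑ i, m i))
      = ∑ i, p i * Real.log ((∑ j, p j) / (∑ j, m j)) := by
        rw [← Finset.sum_mul]
    _ ≤ ∑ i, (p i * Real.log (p i / m i) - (p i - (m i) * ((∑ j, p j) / (∑ j, m j)))) :=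
        Finset.sum_le_sum fun i _ => key i
    _ = ∑ i, p i * Real.log (p i / m i) := by
        have hc : (∑ i, m i) * ((∑ j, p j) / (∑ j, m j)) = ∑ j, p j :=
          mul_div_cancel₀ _ hSm.ne'
        rw [Finset.sum_sub_distrib, Finset.sum_sub_distrib, ← Finset.sum_mul, hc,
          sub_self, sub_zero]

/-- The Jensen–Shannon-type divergence between two strictly positive probability
mass functions on a finite type. -/
noncomputable def DJS {γ : Type*} [Fintype γ] (p q : γ → ℝ) : ℝ :=
  ∑ x : γ, (p x * Real.log (2 * p x / (p x + q x)) +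
            q x * Real.log (2 * q x / (p x + q x)))

/-- One half of the JS marginalization: marginal KL-to-midpoint bound. -/
lemma half_bound {β : Type*} [Fintype β] [Nonempty β] (u v : β → ℝ)
    (hu : ∀ b, 0 < u b) (hv : ∀ b, 0 < v b) :
    (∑ b, u b) * Real.log (2 * (∑ b, u b) / ((∑ b, u b) + (∑ b, v b))) ≤
      ∑ b, u b * Real.log (2 * u b / (u b + v b)) := by
  have h1 : ∀ b, 2 * u b / (u b + v b) = u b / ((u b + v b) / 2) := by
    intro b
    have := hu b; have := hv b
    field_simp
  have hSu : 0 < ∑ b, u b := Finset.sum_pos (fun b _ => hu b) Finset.univ_nonempty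
  have hSv : 0 < ∑ b, v b := Finset.sum_pos (fun b _ => hv b) Finset.univ_nonempty
  have h2 : 2 * (∑ b, u b) / ((∑ b, u b) + (∑ b, v b))
      = (∑ b, u b) / (∑ b, (u b + v b) / 2) := by
    have e : ∑ b, (u b + v b) / 2 = ((∑ b, u b) + (∑ b, v b)) / 2 := by
      rw [← Finset.sum_div, Finset.sum_add_distrib]
    rw [e]
    field_simp
  simp only [h1, h2]
  exact log_sum_ineq u (fun b => (u b + v b) / 2) hu
    (fun b => by have := hu b; have := hv b; positivity)

/-- The Jensen–Shannon-type divergence of the `α`-marginals is at most that of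
the joint distributions. -/
theorem js_divergence_marginalization
    {α β : Type*} [Fintype α] [Fintype β]
    (p q : α × β → ℝ)
    (hp0 : ∀ x, 0 < p x) (hp1 : ∑ x, p x = 1)
    (hq0 : ∀ x, 0 < q x) (hq1 : ∑ x, q x = 1) :
    DJS (fun a : α => ∑ b : β, p (a, b)) (fun a : α => ∑ b : β, q (a, b))
      ≤ DJS p q := by
  cases isEmpty_or_nonempty β with
  | inl h => exfalso; simp [Finset.univ_eq_empty] at hp1
  | inr h =>
    unfold DJS
    rw [Fintype.sum_prod_type]
    apply Finset.sum_le_sum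
    intro a _
    have h1 := half_bound (fun b => p (a, b)) (fun b => q (a, b))
      (fun b => hp0 _) (fun b => hq0 _)
    have h2 := half_bound (fun b => q (a, b)) (fun b => p (a, b))
      (fun b => hq0 _) (fun b => hp0 _)
    have e1 : ∀ b : β, q (a, b) + p (a, b) = p (a, b) + q (a, b) := fun b => add_comm _ _
    simp only [e1, add_comm (∑ b, q (a, b)) (∑ b, p (a, b))] at h2
    rw [Finset.sum_add_distrib]
    exact add_le_add h1 h2
end

section
/- Let α be a finite type and let p and q be probability mass functions on α with q strictly positive. Then KL(p‖q) ≤ log(1 + χ²(p‖q)). -/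
/-- **KL is bounded by `log(1 + χ²)`.**
For probability mass functions `p`, `q` on a finite type with `q` strictly
positive, `KL(p‖q) ≤ log (1 + χ²(p‖q))`.  (The convention `0 · log 0 = 0` is
automatic since `0 * r = 0` and `Real.log 0 = 0` in Mathlib.) -/
theorem kl_le_log_one_add_chiSq
    {α : Type*} [Fintype α]
    (p q : α → ℝ)
    (hp0 : ∀ x, 0 ≤ p x) (hp1 : ∑ x, p x = 1)
    (hq0 : ∀ x, 0 < q x) (hq1 : ∑ x, q x = 1) :
    ∑ x, p x * Real.log (p x / q x)
      ≤ Real.log (1 + ∑ x, (p x - q x) ^ 2 / q x) := by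
  classical
  set s : Finset α := Finset.univ.filter (fun x => p x ≠ 0) with hs
  have hps : ∑ x ∈ s, p x = 1 := by
    rw [← hp1]
    exact Finset.sum_filter_of_ne (fun x _ h => by
      intro hpx; exact h (by rw [hpx]))
  -- rewrite χ² identity: 1 + ∑ (p-q)²/q = ∑ p²/q
  have hchi : 1 + ∑ x, (p x - q x) ^ 2 / q x = ∑ x, (p x) ^ 2 / q x := by
    have : ∀ x : α, (p x - q x) ^ 2 / q x = (p x) ^ 2 / q x - 2 * p x + q x := by
      intro x
      rw [div_eq_iff (hq0 x).ne', add_mul, sub_mul, div_mul_cancel₀ _ (hq0 x).ne']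
      ring
    simp_rw [this]
    rw [Finset.sum_add_distrib, Finset.sum_sub_distrib, ← Finset.mul_sum, hq1, hp1]
    ring
  rw [hchi]
  -- LHS restricted to support
  have hL : ∑ x, p x * Real.log (p x / q x) = ∑ x ∈ s, p x * Real.log (p x / q x) := by
    symm
    exact Finset.sum_filter_of_ne (fun x _ h => by
      intro hpx; exact h (by rw [hpx, zero_mul]))
  rw [hL]
  -- Jensen
  have hjensen : ∑ x ∈ s, p x * Real.log (p x / q x)
      ≤ Real.log (∑ x ∈ s, p x * (p x / q x)) := by
    have := strictConcaveOn_log_Ioi.concaveOn.le_map_sum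
      (t := s) (w := p) (p := fun x => p x / q x)
      (fun i _ => hp0 i) hps
      (fun i hi => by
        have hpi : 0 < p i := lt_of_le_of_ne (hp0 i)
          (Ne.symm (Finset.mem_filter.mp hi).2)
        exact Set.mem_Ioi.mpr (div_pos hpi (hq0 i)))
    simpa [smul_eq_mul] using this
  refine hjensen.trans (Real.log_le_log ?_ ?_)
  · have hne : s.Nonempty := by
      by_contra h
      rw [Finset.not_nonempty_iff_eq_empty] at h
      rw [h, Finset.sum_empty] at hps
      norm_num at hps
    obtain ⟨i, hi⟩ := hne
    have hpi : 0 < p i := lt_of_le_of_ne (hp0 i) (Ne.symm (Finset.mem_filter.mp hi).2)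
    refine Finset.sum_pos' (fun j hj => ?_) ⟨i, hi, ?_⟩
    · have hpj : 0 < p j := lt_of_le_of_ne (hp0 j) (Ne.symm (Finset.mem_filter.mp hj).2)
      exact le_of_lt (mul_pos hpj (div_pos hpj (hq0 j)))
    · exact mul_pos hpi (div_pos hpi (hq0 i))
  · calc ∑ x ∈ s, p x * (p x / q x) = ∑ x ∈ s, (p x) ^ 2 / q x := by
          apply Finset.sum_congr rfl; intro x _; rw [sq]; ring
      _ ≤ ∑ x, (p x) ^ 2 / q x := by
          apply Finset.sum_le_sum_of_subset_of_nonneg (Finset.filter_subset _ _)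
          intro i _ _
          have := hp0 i; have := hq0 i
          positivity
end
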